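/- Let G be a 2-vertex-connected graph, C a cycle in G, and H an earring of C (a connected component of G − V(C)) with at least 2 clasps. Then for any vertex u of H, there exist two paths from u to two distinct vertices of C that are vertex-disjoint except at u and use only vertices of H together with their endpoints on C. -/

import Mathlib

open SimpleGraph

/-- A graph is 2-vertex-connected: at least 3 vertices and deleting any single
vertex leaves a connected graph. -/
def Graph2Conn {V : Type*} (G : SimpleGraph V) : Prop :=
  3 ≤ Nat.card V ∧ ∀ v : V, (G.induce {w | w ≠ v}).Connected

/-- Vertices outside the cycle `C`. -/
def cycOutside {V : Type*} {G : SimpleGraph V} {o : V} (C : G.Walk o o) : Set V :=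
  {x | x ∉ C.support}

/-- The graph `G - V(C)`, whose connected components are the earrings of `C`. -/
def earGraph {V : Type*} {G : SimpleGraph V} {o : V} (C : G.Walk o o) :
    SimpleGraph ↥(cycOutside C) :=
  G.induce (cycOutside C)

/-- `x` is a clasp of the earring `K`: it lies on `C` and is adjacent to `K`. -/
def isClasp {V : Type*} {G : SimpleGraph V} {o : V} (C : G.Walk o o)
    (K : (earGraph C).ConnectedComponent) (x : V) : Prop :=
  x ∈ C.support ∧
    ∃ y : ↥(cycOutside C), (earGraph C).connectedComponentMk y = K ∧ G.Adj x ↑y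

/-- `x` is a vertex of the earring `K`. -/
def inEarring {V : Type*} {G : SimpleGraph V} {o : V} (C : G.Walk o o)
    (K : (earGraph C).ConnectedComponent) (x : V) : Prop :=
  ∃ hx : x ∈ cycOutside C, (earGraph C).connectedComponentMk ⟨x, hx⟩ = K

/-! Induction along a walk from `u` to `C`. If the first step goes from `u` to `v ∈ C`, use
the edge `uv` and a path from `u` to `C - v` in `G - v`. Otherwise take the two paths from `v`
and a walk from `u` to an end of them in `G - v`; stopping it at its first vertex on `C` or on one
of the two paths gives two paths from `u`, possibly after cutting one of the old paths at the
stopping point. Vertices of these paths other than the ends lie off `C`, hence in the earring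
of `u`. -/

lemma Graph2Conn.exists_walk_avoiding {V : Type*} {G : SimpleGraph V} (hG : Graph2Conn G)
    {v a b : V} (ha : a ≠ v) (hb : b ≠ v) : ∃ W : G.Walk a b, v ∉ W.support := by
  obtain ⟨W⟩ := (hG.2 v).preconnected ⟨a, ha⟩ ⟨b, hb⟩
  refine ⟨W.map (Embedding.induce _).toHom, fun hv => ?_⟩
  obtain ⟨⟨x, hx⟩, -, hxv⟩ := List.mem_map.mp (Walk.support_map _ W ▸ hv)
  exact hx hxv

namespace SimpleGraph

variable {V : Type*} {G : SimpleGraph V}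

lemma Walk.IsPath.start_notMem_support_dropUntil [DecidableEq V] {u v w : V}
    {p : G.Walk u v} (hp : p.IsPath) (hw : w ∈ p.support) (huw : u ≠ w) :
    u ∉ (p.dropUntil w hw).support := fun hu =>
  (p.take_spec hw ▸ hp).ne_of_mem_support_of_append huw
    (p.takeUntil w hw).start_mem_support hu rfl

lemma Walk.exists_walk_to_first_mem (T : Set V) {a b : V} (W : G.Walk a b) (hb : b ∈ T) :
    ∃ c ∈ T, ∃ q : G.Walk a c, (∀ x ∈ q.support, x ∈ T → x = c) ∧ q.support ⊆ W.support := by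
  induction W with
  | nil => exact ⟨_, hb, nil, by simp +contextual, by simp⟩
  | @cons a v b h W ih =>
    by_cases ha : a ∈ T
    · exact ⟨a, ha, nil, by simp +contextual, by simp⟩
    obtain ⟨c, hc, q, hqT, hqW⟩ := ih hb
    refine ⟨c, hc, cons h q, ?_, ?_⟩
    · simp only [support_cons, List.mem_cons, forall_eq_or_imp]
      exact ⟨fun h => absurd h ha, hqT⟩
    · simpa only [support_cons] using List.cons_subset_cons a hqW

structure TwoFan (G : SimpleGraph V) (T : Set V) (u : V) where
  c₁ : V
  c₂ : V
  p₁ : G.Walk u c₁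
  p₂ : G.Walk u c₂
  isPath₁ : p₁.IsPath
  isPath₂ : p₂.IsPath
  mem₁ : c₁ ∈ T
  mem₂ : c₂ ∈ T
  ne : c₁ ≠ c₂
  inter : ∀ x ∈ p₁.support, x ∈ p₂.support → x = u
  hit₁ : ∀ x ∈ p₁.support, x ∈ T → x = c₁
  hit₂ : ∀ x ∈ p₂.support, x ∈ T → x = c₂

namespace TwoFan

variable {T : Set V} {u v : V}

def symm (F : TwoFan G T u) : TwoFan G T u where
  c₁ := F.c₂
  c₂ := F.c₁
  p₁ := F.p₂
  p₂ := F.p₁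
  isPath₁ := F.isPath₂
  isPath₂ := F.isPath₁
  mem₁ := F.mem₂
  mem₂ := F.mem₁
  ne := F.ne.symm
  inter x hx₂ hx₁ := F.inter x hx₁ hx₂
  hit₁ := F.hit₂
  hit₂ := F.hit₁

section Constructions

variable [DecidableEq V]

def ofWalks {c₁ c₂ : V} (p₁ : G.Walk u c₁) (p₂ : G.Walk u c₂) (mem₁ : c₁ ∈ T) (mem₂ : c₂ ∈ T)
    (ne : c₁ ≠ c₂) (inter : ∀ x ∈ p₁.support, x ∈ p₂.support → x = u)
    (hit₁ : ∀ x ∈ p₁.support, x ∈ T → x = c₁) (hit₂ : ∀ x ∈ p₂.support, x ∈ T → x = c₂) :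
    TwoFan G T u where
  c₁ := c₁
  c₂ := c₂
  p₁ := p₁.bypass
  p₂ := p₂.bypass
  isPath₁ := p₁.bypass_isPath
  isPath₂ := p₂.bypass_isPath
  mem₁ := mem₁
  mem₂ := mem₂
  ne := ne
  inter x hx₁ hx₂ := inter x (p₁.support_bypass_subset_support hx₁)
    (p₂.support_bypass_subset_support hx₂)
  hit₁ x hx := hit₁ x (p₁.support_bypass_subset_support hx)
  hit₂ x hx := hit₂ x (p₂.support_bypass_subset_support hx)

def consOfDisjoint (h : G.Adj u v) (hu : u ∉ T) {c w : V} (p : G.Walk v c) (hc : c ∈ T)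
    (hpT : ∀ x ∈ p.support, x ∈ T → x = c) (q : G.Walk u w) (hw : w ∈ T)
    (hqT : ∀ x ∈ q.support, x ∈ T → x = w) (hqp : ∀ x ∈ q.support, x ∉ p.support) :
    TwoFan G T u :=
  ofWalks q (.cons h p) hw hc (fun hwc => hqp w q.end_mem_support (hwc ▸ p.end_mem_support))
    (fun x hxq hx => by
      rcases List.mem_cons.mp hx with rfl | hxp
      · rfl
      · exact absurd hxp (hqp x hxq))
    hqT (fun x hx hxT => by
      rcases List.mem_cons.mp hx with rfl | hxp
      · exact absurd hxT hu
      · exact hpT x hxp hxT)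

def rerouteLeft (F : TwoFan G T v) (h : G.Adj u v) (hu : u ∉ T) {w : V} (q : G.Walk u w)
    (hw : w ∈ F.p₁.support) (hqT : ∀ x ∈ q.support, x ∈ T → x = w)
    (hq₂ : ∀ x ∈ q.support, x ∉ F.p₂.support) :
    TwoFan G T u :=
  have hwv : w ≠ v := fun hwv => hq₂ w q.end_mem_support (hwv ▸ F.p₂.start_mem_support)
  ofWalks (q.append (F.p₁.dropUntil w hw)) (.cons h F.p₂) F.mem₁ F.mem₂ F.ne
    (fun x hx hx₂ => by
      rcases List.mem_cons.mp hx₂ with rfl | hx₂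
      · rfl
      rcases (Walk.mem_support_append_iff _ _).mp hx with hxq | hxd
      · exact absurd hx₂ (hq₂ x hxq)
      have hxv : x = v := F.inter x (F.p₁.support_dropUntil_subset_support hw hxd) hx₂
      subst hxv
      exact absurd hxd (F.isPath₁.start_notMem_support_dropUntil hw hwv.symm))
    (fun x hx hxT => by
      rcases (Walk.mem_support_append_iff _ _).mp hx with hxq | hxd
      · obtain rfl := hqT x hxq hxT
        exact F.hit₁ x hw hxT
      · exact F.hit₁ x (F.p₁.support_dropUntil_subset_support hw hxd) hxT)
    (fun x hx hxT => by
      rcases List.mem_cons.mp hx with rfl | hx₂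
      · exact absurd hxT hu
      · exact F.hit₂ x hx₂ hxT)

end Constructions

lemma nonempty_of_adj_mem (hG : Graph2Conn G) (h : G.Adj u v) (hu : u ∉ T) (hv : v ∈ T)
    {c : V} (hc : c ∈ T) (hcv : c ≠ v) : Nonempty (TwoFan G T u) := by
  classical
  obtain ⟨R, hvR⟩ := hG.exists_walk_avoiding h.ne hcv
  obtain ⟨w, hw, q, hqT, hqR⟩ := R.exists_walk_to_first_mem T hc
  exact ⟨consOfDisjoint h hu .nil hv (fun x hx _ => List.mem_singleton.mp hx) q hw hqT
    fun x hxq hx => hvR (List.mem_singleton.mp hx ▸ hqR hxq)⟩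

lemma nonempty_of_adj (F : TwoFan G T v) (hG : Graph2Conn G) (h : G.Adj u v) (hu : u ∉ T)
    (hv : v ∉ T) : Nonempty (TwoFan G T u) := by
  classical
  obtain ⟨R, hvR⟩ := hG.exists_walk_avoiding h.ne (fun hc => hv (hc ▸ F.mem₁))
  obtain ⟨w, hwS, q, hqS, hqR⟩ := R.exists_walk_to_first_mem
    {x | x ∈ T ∨ x ∈ F.p₁.support ∨ x ∈ F.p₂.support} (Or.inl F.mem₁)
  have hvq : v ∉ q.support := fun hvq => hvR (hqR hvq)
  have hqT : ∀ x ∈ q.support, x ∈ T → x = w := fun x hx hxT => hqS x hx (Or.inl hxT)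
  by_cases hw₁ : w ∈ F.p₁.support
  · refine ⟨F.rerouteLeft h hu q hw₁ hqT fun x hxq hx₂ => hvq ?_⟩
    obtain rfl := hqS x hxq (Or.inr (Or.inr hx₂))
    exact F.inter x hw₁ hx₂ ▸ hxq
  by_cases hw₂ : w ∈ F.p₂.support
  · refine ⟨F.symm.rerouteLeft h hu q hw₂ hqT fun x hxq hx₁ => hvq ?_⟩
    obtain rfl := hqS x hxq (Or.inr (Or.inl hx₁))
    exact F.inter x hx₁ hw₂ ▸ hxq
  have hwT : w ∈ T := by simpa [hw₁, hw₂] using hwS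
  exact ⟨consOfDisjoint h hu F.p₁ F.mem₁ F.hit₁ q hwT hqT
    fun x hxq hx₁ => hw₁ (hqS x hxq (Or.inr (Or.inl hx₁)) ▸ hx₁)⟩

lemma nonempty_of_walk (hG : Graph2Conn G) {a b : V} (ha : a ∈ T) (hb : b ∈ T) (hab : a ≠ b)
    {c : V} (W : G.Walk u c) (hc : c ∈ T) (hu : u ∉ T) : Nonempty (TwoFan G T u) := by
  induction W with
  | nil => exact absurd hc hu
  | @cons u v c h W ih =>
    by_cases hv : v ∈ T
    · obtain hav | hbv := eq_or_ne a v
      · exact nonempty_of_adj_mem hG h hu hv hb (hav ▸ hab.symm)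
      · exact nonempty_of_adj_mem hG h hu hv ha hbv
    · exact (ih hc hv).some.nonempty_of_adj hG h hu hv

end TwoFan

end SimpleGraph

lemma Graph2Conn.nonempty_twoFan {V : Type*} {G : SimpleGraph V} (hG : Graph2Conn G)
    {T : Set V} {a b u : V} (ha : a ∈ T) (hb : b ∈ T) (hab : a ≠ b) (hu : u ∉ T) :
    Nonempty (TwoFan G T u) := by
  classical
  obtain ⟨W, -⟩ := hG.exists_walk_avoiding (a := u) (b := a) (fun hub => hu (hub ▸ hb)) hab
  exact TwoFan.nonempty_of_walk hG ha hb hab W ha hu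

section Earring

variable {V : Type*} {G : SimpleGraph V} {o : V} {C : G.Walk o o}
  {K : (earGraph C).ConnectedComponent}

lemma inEarring_of_adj {x y : V} (hx : inEarring C K x) (h : G.Adj x y) (hy : y ∉ C.support) :
    inEarring C K y := by
  obtain ⟨hxC, rfl⟩ := hx
  exact ⟨hy, (ConnectedComponent.connectedComponentMk_eq_of_adj
    (show (earGraph C).Adj ⟨x, hxC⟩ ⟨y, hy⟩ from h)).symm⟩

lemma inEarring_of_mem_support {u c : V} (P : G.Walk u c) (hP : P.IsPath)
    (hPC : ∀ x ∈ P.support, x ∈ C.support → x = c) (hu : inEarring C K u) :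
    ∀ x ∈ P.support, x ≠ c → inEarring C K x := by
  induction P with
  | nil => simp [hu]
  | @cons u v c h P ih =>
    intro x hx hxc
    rcases List.mem_cons.mp hx with rfl | hxP
    · exact hu
    by_cases hvC : v ∈ C.support
    · obtain rfl := hPC v (by simp) hvC
      rw [Walk.nil_iff_support_eq.mp (Walk.isPath_iff_nil.mp hP.of_cons)] at hxP
      exact absurd (List.mem_singleton.mp hxP) hxc
    · exact ih hP.of_cons (fun y hy => hPC y (by simp [hy]))
        (inEarring_of_adj hu h hvC) x hxP hxc

end Earring

theorem two_disjoint_paths_from_earring_to_cycle_general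
    {V : Type*} {G : SimpleGraph V} (hG : Graph2Conn G)
    {o : V} (C : G.Walk o o) (hC : C.IsCycle)
    (K : (earGraph C).ConnectedComponent)
    (u : V) (hu : inEarring C K u) :
    ∃ c1 c2 : V, c1 ∈ C.support ∧ c2 ∈ C.support ∧ c1 ≠ c2 ∧
      ∃ (P1 : G.Walk u c1) (P2 : G.Walk u c2), P1.IsPath ∧ P2.IsPath ∧
        -- the two paths share only the vertex u
        (∀ x ∈ P1.support, x ∈ P2.support → x = u) ∧
        -- each path uses only vertices of the earring plus its endpoint on C
        (∀ x ∈ P1.support, x ≠ c1 → inEarring C K x) ∧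
        (∀ x ∈ P2.support, x ≠ c2 → inEarring C K x) := by
  obtain ⟨F⟩ := hG.nonempty_twoFan (T := {x | x ∈ C.support}) C.start_mem_support
    (C.getVert_mem_support 1) (C.adj_snd hC.not_nil).ne hu.1
  exact ⟨F.c₁, F.c₂, F.mem₁, F.mem₂, F.ne, F.p₁, F.p₂, F.isPath₁, F.isPath₂, F.inter,
    inEarring_of_mem_support F.p₁ F.isPath₁ F.hit₁ hu,
    inEarring_of_mem_support F.p₂ F.isPath₂ F.hit₂ hu⟩

theorem two_disjoint_paths_from_earring_to_cycle
    {V : Type*} {G : SimpleGraph V} (hG : Graph2Conn G)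
    {o : V} (C : G.Walk o o) (hC : C.IsCycle)
    (K : (earGraph C).ConnectedComponent)
    -- K has at least 2 clasps
    (hclasps : ∃ x y : V, x ≠ y ∧ isClasp C K x ∧ isClasp C K y)
    (u : V) (hu : inEarring C K u) :
    ∃ c1 c2 : V, c1 ∈ C.support ∧ c2 ∈ C.support ∧ c1 ≠ c2 ∧
      ∃ (P1 : G.Walk u c1) (P2 : G.Walk u c2), P1.IsPath ∧ P2.IsPath ∧
        -- the two paths share only the vertex u
        (∀ x ∈ P1.support, x ∈ P2.support → x = u) ∧
        -- each path uses only vertices of the earring plus its endpoint on C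
        (∀ x ∈ P1.support, x ≠ c1 → inEarring C K x) ∧
        (∀ x ∈ P2.support, x ≠ c2 → inEarring C K x) :=
  two_disjoint_paths_from_earring_to_cycle_general hG C hC K u hu
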